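/- arXiv:2502.17193 — 3 statements merged into one kernel-verified Lean document; each statement's English description precedes it below -/
import Mathlib

section
/- Let A be a skew-symmetric endomorphism of a 3-dimensional Lorentzian vector space (V, ⟨-,-⟩) all of whose (complex) eigenvalues are real and not all zero. Then A has eigenvalues 0, λ, −λ for some λ ≠ 0, and the 0-eigenvector is spacelike. -/
/-- The standard Minkowski scalar product of signature (2,1) on ℝ³. -/
def minkowski (u v : Fin 3 → ℝ) : ℝ := u 0 * v 0 + u 1 * v 1 - u 2 * v 2

/-!
Skew-symmetry for `diag(1, 1, -1)` forces the matrix `[[0, a, b], [-a, 0, c], [b, c, 0]]`, whose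
characteristic polynomial is `X³ - δ X` with `δ = b² + c² - a²`. A real splitting needs `δ ≥ 0`,
and `δ = 0` would make `A` nilpotent by Cayley–Hamilton; so the eigenvalues are `0, ±√δ`. The
kernel is spanned by `(c, -b, a)`, whose Minkowski square is `δ > 0`.
-/

open Polynomial Module.End

theorem Polynomial.nonneg_of_splits_X_pow_three_sub_C_mul_X {K : Type*} [Field K] [LinearOrder K]
    [IsStrictOrderedRing K] {d : K} (h : Splits (X ^ 3 - C d * X)) : 0 ≤ d := by
  have hquad : Splits (X ^ 2 - C d) :=
    h.of_dvd (fun h0 ↦ by simpa using congr_arg (coeff · 3) h0) ⟨X, by ring⟩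
  obtain ⟨r, hr⟩ :=
    hquad.exists_eval_eq_zero (by rw [degree_X_pow_sub_C (by norm_num)]; norm_num)
  simp only [eval_sub, eval_pow, eval_X, eval_C, sub_eq_zero] at hr
  exact hr ▸ sq_nonneg r

/-- The matrix `M` is the general one with `diag(1, 1, -1) * M` antisymmetric. -/
def lorentzSkew (a b c : ℝ) : Module.End ℝ (Fin 3 → ℝ) :=
  Matrix.toLin' !![0, a, b; -a, 0, c; b, c, 0]

theorem lorentzSkew_apply (a b c : ℝ) (v : Fin 3 → ℝ) :
    lorentzSkew a b c v = ![a * v 1 + b * v 2, -(a * v 0) + c * v 2, b * v 0 + c * v 1] := by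
  ext i
  fin_cases i <;> simp [lorentzSkew, Matrix.mulVec, dotProduct, Fin.sum_univ_three]

theorem exists_eq_lorentzSkew {A : Module.End ℝ (Fin 3 → ℝ)}
    (hskew : ∀ u v : Fin 3 → ℝ, minkowski (A u) v + minkowski u (A v) = 0) :
    ∃ a b c, A = lorentzSkew a b c := by
  refine ⟨A (Pi.single 1 1) 0, A (Pi.single 2 1) 0, A (Pi.single 2 1) 1, ?_⟩
  apply LinearMap.toMatrix'.injective
  rw [lorentzSkew, LinearMap.toMatrix'_toLin']
  ext i j
  have hij := hskew (Pi.single i 1) (Pi.single j 1)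
  fin_cases i <;> fin_cases j <;> simp [minkowski, LinearMap.toMatrix'_apply] at hij ⊢ <;> linarith

theorem charpoly_lorentzSkew (a b c : ℝ) :
    (lorentzSkew a b c).charpoly = X ^ 3 - C (b ^ 2 + c ^ 2 - a ^ 2) * X := by
  rw [lorentzSkew, Matrix.charpoly_toLin', Matrix.charpoly, Matrix.det_fin_three]
  simp [Matrix.charmatrix_apply_eq, Matrix.charmatrix_apply_ne]
  ring

theorem hasEigenvalue_lorentzSkew_iff {a b c r : ℝ} :
    HasEigenvalue (lorentzSkew a b c) r ↔ r = 0 ∨ r ^ 2 = b ^ 2 + c ^ 2 - a ^ 2 := by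
  rw [hasEigenvalue_iff_isRoot_charpoly, charpoly_lorentzSkew, IsRoot.def,
    ← sub_eq_zero (a := r ^ 2), ← mul_eq_zero]
  simp only [eval_sub, eval_mul, eval_pow, eval_X, eval_C]
  ring_nf

theorem isNilpotent_lorentzSkew_iff {a b c : ℝ} :
    IsNilpotent (lorentzSkew a b c) ↔ b ^ 2 + c ^ 2 - a ^ 2 = 0 := by
  rw [LinearMap.isNilpotent_iff_charpoly, charpoly_lorentzSkew, Module.finrank_fin_fun]
  simp only [sub_eq_self, mul_eq_zero, X_ne_zero, or_false, C_eq_zero]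

theorem minkowski_self_pos_of_lorentzSkew_eq_zero {a b c : ℝ} (hδ : 0 < b ^ 2 + c ^ 2 - a ^ 2)
    {v : Fin 3 → ℝ} (hv : v ≠ 0) (hker : lorentzSkew a b c v = 0) : 0 < minkowski v v := by
  have hnorm : 0 < v 0 ^ 2 + v 1 ^ 2 + v 2 ^ 2 := by
    by_contra! h
    apply hv
    ext i
    fin_cases i <;> simp <;> nlinarith [sq_nonneg (v 0), sq_nonneg (v 1), sq_nonneg (v 2)]
  have h0 := congr_fun hker 0
  have h1 := congr_fun hker 1
  simp only [lorentzSkew_apply, Matrix.cons_val_zero, Matrix.cons_val_one, Pi.zero_apply]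
    at h0 h1
  -- `v` is a multiple of `(c, -b, a)`, written so as to avoid dividing by `a² + b² + c²`.
  have key : (a ^ 2 + b ^ 2 + c ^ 2) * minkowski v v
      = (b ^ 2 + c ^ 2 - a ^ 2) * (v 0 ^ 2 + v 1 ^ 2 + v 2 ^ 2) := by
    unfold minkowski
    linear_combination (2 * (a * v 1 - b * v 2)) * h0 + (-(2 * (a * v 0)) - 2 * (c * v 2)) * h1
  have hsum : 0 < a ^ 2 + b ^ 2 + c ^ 2 := by nlinarith [sq_nonneg a]
  exact pos_of_mul_pos_right (key ▸ mul_pos hδ hnorm) hsum.le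

/-- A skew-symmetric endomorphism of 3-dimensional Minkowski space all of whose complex
eigenvalues are real (its characteristic polynomial splits over ℝ) and which is not nilpotent
(not all eigenvalues zero) has eigenvalues `0, λ, -λ` for some `λ ≠ 0`, and every nonzero
vector in its kernel is spacelike. -/
theorem stmt2 (A : (Fin 3 → ℝ) →ₗ[ℝ] (Fin 3 → ℝ))
    (hskew : ∀ u v : Fin 3 → ℝ, minkowski (A u) v + minkowski u (A v) = 0)
    (hreal : Polynomial.Splits ((LinearMap.charpoly A).map (RingHom.id ℝ)))
    (hnz : ¬ IsNilpotent A) :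
    ∃ l : ℝ, l ≠ 0 ∧
      Module.End.HasEigenvalue A l ∧
      Module.End.HasEigenvalue A (-l) ∧
      Module.End.HasEigenvalue A 0 ∧
      ∀ v : Fin 3 → ℝ, v ≠ 0 → A v = 0 → minkowski v v > 0 := by
  obtain ⟨a, b, c, rfl⟩ := exists_eq_lorentzSkew hskew
  rw [map_id, charpoly_lorentzSkew] at hreal
  rw [isNilpotent_lorentzSkew_iff] at hnz
  have hδ : 0 < b ^ 2 + c ^ 2 - a ^ 2 :=
    (nonneg_of_splits_X_pow_three_sub_C_mul_X hreal).lt_of_ne' hnz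
  have hl : √(b ^ 2 + c ^ 2 - a ^ 2) ^ 2 = b ^ 2 + c ^ 2 - a ^ 2 := Real.sq_sqrt hδ.le
  refine ⟨√(b ^ 2 + c ^ 2 - a ^ 2), (Real.sqrt_pos.mpr hδ).ne', ?_, ?_, ?_, ?_⟩
  · exact hasEigenvalue_lorentzSkew_iff.mpr (Or.inr hl)
  · exact hasEigenvalue_lorentzSkew_iff.mpr (Or.inr (by rw [neg_sq, hl]))
  · exact hasEigenvalue_lorentzSkew_iff.mpr (Or.inl rfl)
  · exact fun v hv hker ↦ minkowski_self_pos_of_lorentzSkew_eq_zero hδ hv hker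
end

section
/- Let A be a nonzero nilpotent skew-symmetric endomorphism of a 3-dimensional Lorentzian vector space V. Then A is 3-step nilpotent: A² ≠ 0 and A³ = 0, and there exists u ∈ V such that {A²u, Au, u} is a basis of V. -/
theorem Module.End.pow_finrank_eq_zero_of_isNilpotent {K V : Type*} [Field K] [AddCommGroup V]
    [Module K V] [FiniteDimensional K V] {f : Module.End K V} (hf : IsNilpotent f) :
    f ^ Module.finrank K V = 0 := by
  simpa [hf.charpoly_eq_X_pow_finrank] using f.aeval_self_charpoly

theorem linearIndependent_of_apply_apply_ne_zero {K V : Type*} [Field K] [AddCommGroup V]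
    [Module K V] {f : V →ₗ[K] V} {u : V} (h3 : f (f (f u)) = 0) (h2 : f (f u) ≠ 0) :
    LinearIndependent K ![f (f u), f u, u] := by
  rw [Fintype.linearIndependent_iff]
  intro g hg
  simp only [Fin.sum_univ_three, Matrix.cons_val_zero, Matrix.cons_val_one,
    Matrix.cons_val_two] at hg
  have hg2 : g 2 = 0 := by simpa [h3, h2] using congrArg (fun v => f (f v)) hg
  have hg1 : g 1 = 0 := by simpa [h3, hg2, h2] using congrArg f hg
  have hg0 : g 0 = 0 := by simpa [hg1, hg2, h2] using hg
  intro i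
  fin_cases i <;> assumption

def minkowskiSkewMatrix (a b c : ℝ) : Matrix (Fin 3) (Fin 3) ℝ := !![0, a, b; -a, 0, c; b, c, 0]

theorem exists_toMatrixAlgEquiv'_eq_minkowskiSkewMatrix {A : (Fin 3 → ℝ) →ₗ[ℝ] (Fin 3 → ℝ)}
    (hskew : ∀ u v : Fin 3 → ℝ, minkowski (A u) v + minkowski u (A v) = 0) :
    ∃ a b c, LinearMap.toMatrixAlgEquiv' A = minkowskiSkewMatrix a b c := by
  refine ⟨A (Pi.single 1 1) 0, A (Pi.single 2 1) 0, A (Pi.single 2 1) 1, ?_⟩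
  ext i j
  have h := hskew (Pi.single j 1) (Pi.single i 1)
  fin_cases i <;> fin_cases j <;>
    simp [minkowski, minkowskiSkewMatrix, LinearMap.toMatrixAlgEquiv'_apply] at h ⊢ <;> linarith

theorem minkowskiSkewMatrix_pow_three (a b c : ℝ) :
    minkowskiSkewMatrix a b c ^ 3 = (b ^ 2 + c ^ 2 - a ^ 2) • minkowskiSkewMatrix a b c := by
  ext i j
  fin_cases i <;> fin_cases j <;>
    simp [minkowskiSkewMatrix, pow_succ, Matrix.mul_apply, Fin.sum_univ_three] <;> ring

theorem minkowskiSkewMatrix_sq_ne_zero {a b c : ℝ} (hS : minkowskiSkewMatrix a b c ≠ 0)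
    (hS3 : minkowskiSkewMatrix a b c ^ 3 = 0) : minkowskiSkewMatrix a b c ^ 2 ≠ 0 := by
  have hlight : b ^ 2 + c ^ 2 = a ^ 2 := by
    rw [minkowskiSkewMatrix_pow_three, smul_eq_zero] at hS3
    linarith [hS3.resolve_right hS]
  have ha : a ≠ 0 := by
    rintro rfl
    obtain ⟨rfl, rfl⟩ : b = 0 ∧ c = 0 := by
      constructor <;> nlinarith [sq_nonneg b, sq_nonneg c]
    exact hS (by ext i j; fin_cases i <;> fin_cases j <;> simp [minkowskiSkewMatrix])
  intro hS2
  have h22 : (minkowskiSkewMatrix a b c ^ 2) 2 2 = b ^ 2 + c ^ 2 := by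
    simp [minkowskiSkewMatrix, sq, Matrix.mul_apply, Fin.sum_univ_three]
  rw [hS2, hlight] at h22
  exact ha (pow_eq_zero_iff two_ne_zero |>.mp h22.symm)

/-- A nonzero nilpotent skew-symmetric endomorphism of 3-dimensional Minkowski space is
3-step nilpotent: `A² ≠ 0`, `A³ = 0`, and there is `u` such that `{A²u, Au, u}` is a basis. -/
theorem stmt4 (A : (Fin 3 → ℝ) →ₗ[ℝ] (Fin 3 → ℝ)) (hA : A ≠ 0)
    (hskew : ∀ u v : Fin 3 → ℝ, minkowski (A u) v + minkowski u (A v) = 0)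
    (hnil : IsNilpotent A) :
    A ∘ₗ A ≠ 0 ∧ A ∘ₗ A ∘ₗ A = 0 ∧
    ∃ u : Fin 3 → ℝ, LinearIndependent ℝ ![A (A u), A u, u] := by
  have hA3 : A ^ 3 = 0 := by
    simpa using Module.End.pow_finrank_eq_zero_of_isNilpotent hnil
  have hA2 : A ^ 2 ≠ 0 := by
    obtain ⟨a, b, c, hM⟩ := exists_toMatrixAlgEquiv'_eq_minkowskiSkewMatrix hskew
    have hS : minkowskiSkewMatrix a b c ≠ 0 :=
      hM ▸ (map_ne_zero_iff _ LinearMap.toMatrixAlgEquiv'.injective).mpr hA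
    have hS3 : minkowskiSkewMatrix a b c ^ 3 = 0 := by rw [← hM, ← map_pow, hA3, map_zero]
    intro h
    apply minkowskiSkewMatrix_sq_ne_zero hS hS3
    rw [← hM, ← map_pow, h, map_zero]
  obtain ⟨u, hu⟩ : ∃ u, A (A u) ≠ 0 := by
    by_contra! h
    exact hA2 (LinearMap.ext fun v => by simpa [sq] using h v)
  have hAAA : ∀ v, A (A (A v)) = 0 := fun v => by
    simpa [pow_succ] using LinearMap.congr_fun hA3 v
  exact ⟨fun h => hu (by simpa using LinearMap.congr_fun h u), LinearMap.ext hAAA, u,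
    linearIndependent_of_apply_apply_ne_zero (hAAA u) hu⟩
end

section
/- Let L = ℝ ⋉_σ ℝ³ be a solvable 4-dimensional Lie algebra with abelian derived algebra equal to ℝ³ (i.e. [L,L] = ℝ³). Then there is no one-dimensional subspace I of L spanned by an element U such that the induced map on L/I is a nonzero skew-symmetric endomorphism for some nondegenerate symmetric bilinear form of signature (3,0) or (2,1) on L/I. -/
/-!
If `U ∉ N`, then `L = ℝU ⊕ N`, and since `N` is abelian every bracket `⁅aU + n, bU + m⁆` equals
`⁅U, am - bn⁆`; so `N = [L, L]` lies in the image of `ad U` and the induced map on `L / ℝU` is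
surjective. But a map that is skew for a nondegenerate form `J` in odd dimension is singular:
`Aᵀ J = -J A` gives `det A = -det A`.

If `U ∈ N`, then `(ad U)² = 0` because `[L, L] ⊆ N` and `N` is abelian, so
`q (A u) (A v) = -q u (A² v) = 0`: the range of `A` is totally isotropic. For the form
`diag(1, 1, ε)` this forces `A = 0`.
-/

open Module Matrix

theorem Matrix.IsSkewAdjoint.det_eq_zero {n K : Type*} [Fintype n] [DecidableEq n] [Field K]
    [NeZero (2 : K)] {J M : Matrix n n K} (hM : J.IsSkewAdjoint M) (hJ : J.det ≠ 0)
    (hn : Odd (Fintype.card n)) : M.det = 0 := by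
  have h := congrArg det hM
  rw [det_mul, det_mul, det_transpose, det_neg, hn.neg_one_pow, mul_comm J.det] at h
  have : (2 : K) * (M.det * J.det) = 0 := by linear_combination h
  simpa [hJ, two_ne_zero] using this

theorem Matrix.IsSkewAdjoint.eq_zero_of_mul_self_eq_zero {K : Type*} [Field K] [LinearOrder K]
    [IsStrictOrderedRing K] {d : Fin 3 → K} {M : Matrix (Fin 3) (Fin 3) K}
    (hM : (diagonal d).IsSkewAdjoint M) (hM2 : M * M = 0)
    (h0 : 0 < d 0) (h1 : 0 < d 1) (h2 : d 2 ≠ 0) : M = 0 := by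
  have hskew (i j : Fin 3) : M i j * d i = -(d j * M j i) := by
    simpa [mul_apply, diagonal_apply] using congrFun (congrFun hM j) i
  -- the columns of `M` are isotropic, since `Mᵀ D M = -D M M = 0`
  have hiso (j : Fin 3) : M 0 j ^ 2 * d 0 + M 1 j ^ 2 * d 1 + M 2 j ^ 2 * d 2 = 0 := by
    have : Mᵀ * diagonal d * M = 0 := by
      rw [show Mᵀ * diagonal d = _ from hM, Matrix.mul_assoc, Matrix.neg_mul, hM2, neg_zero,
        Matrix.mul_zero]
    simpa [mul_apply, diagonal_apply, Fin.sum_univ_three, sq, mul_right_comm]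
      using congrFun (congrFun this j) j
  have hcol (j : Fin 3) (hj : M 2 j = 0) : M 0 j = 0 ∧ M 1 j = 0 := by
    have h := hiso j
    rw [hj, zero_pow two_ne_zero, zero_mul, add_zero] at h
    obtain ⟨h0j, h1j⟩ := (add_eq_zero_iff_of_nonneg (mul_nonneg (sq_nonneg _) h0.le)
      (mul_nonneg (sq_nonneg _) h1.le)).mp h
    simpa [h0.ne', h1.ne'] using And.intro h0j h1j
  have h22 : M 2 2 = 0 := by
    simpa [h2] using (by linear_combination hskew 2 2 : (2 : K) * (M 2 2 * d 2) = 0)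
  obtain ⟨h02, h12⟩ := hcol 2 h22
  have h20 : M 2 0 = 0 := by simpa [h02, h2] using hskew 2 0
  have h21 : M 2 1 = 0 := by simpa [h12, h2] using hskew 2 1
  obtain ⟨h00, h10⟩ := hcol 0 h20
  obtain ⟨h01, h11⟩ := hcol 1 h21
  ext i j
  fin_cases i <;> fin_cases j <;> assumption

theorem LinearMap.IsSkewAdjoint.toMatrix {R V ι : Type*} [CommRing R] [AddCommGroup V]
    [Module R V] [Fintype ι] [DecidableEq ι] {q : LinearMap.BilinForm R V} {A : V →ₗ[R] V}
    (hA : q.IsSkewAdjoint A) (b : Basis ι R V) :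
    (LinearMap.BilinForm.toMatrix b q).IsSkewAdjoint (LinearMap.toMatrix b b A) := by
  have h : q.compLeft A = q.compRight (-A) := by
    ext u v
    exact hA u v
  change _ = _
  rw [← LinearMap.BilinForm.toMatrix_compLeft, h, LinearMap.BilinForm.toMatrix_compRight, map_neg]

theorem Submodule.span_singleton_sup_eq_top {K V : Type*} [Field K] [AddCommGroup V] [Module K V]
    [FiniteDimensional K V] {W : Submodule K V} {U : V} (hU : U ∉ W)
    (hW : finrank K W + 1 = finrank K V) : K ∙ U ⊔ W = ⊤ := by
  have hlt : W < K ∙ U ⊔ W :=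
    lt_of_le_of_ne le_sup_right fun h => hU (h ▸ mem_sup_left (mem_span_singleton_self U))
  apply eq_top_of_finrank_eq
  have := finrank_lt_finrank_of_lt hlt
  have := finrank_le (K ∙ U ⊔ W)
  omega

section Lie

variable {R L : Type*} [CommRing R] [LieRing L] [LieAlgebra R L] {N : LieIdeal R L}

theorem LieIdeal.lie_eq_zero_of_isLieAbelian (hN : IsLieAbelian N) {x y : L} (hx : x ∈ N)
    (hy : y ∈ N) : ⁅x, y⁆ = 0 := by
  have h := LieSubmodule.lie_mem_lie hx hy
  rwa [(LieSubmodule.lie_abelian_iff_lie_self_eq_bot N).mp hN, LieSubmodule.mem_bot] at h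

theorem LieIdeal.lie_lie_eq_zero_of_mem (hN : IsLieAbelian N)
    (hder : ⁅(⊤ : LieIdeal R L), ⊤⁆ ≤ N) {U : L} (hU : U ∈ N) (x : L) : ⁅U, ⁅U, x⁆⁆ = 0 :=
  LieIdeal.lie_eq_zero_of_isLieAbelian hN hU
    (hder (LieSubmodule.lie_mem_lie (LieSubmodule.mem_top U) (LieSubmodule.mem_top x)))

theorem LieIdeal.lie_top_top_le_range_ad (hN : IsLieAbelian N) {U : L}
    (hsup : R ∙ U ⊔ N.toSubmodule = ⊤) :
    (⁅(⊤ : LieIdeal R L), ⊤⁆ : LieIdeal R L).toSubmodule ≤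
      LinearMap.range (LieAlgebra.ad R L U) := by
  have hmem (z : L) : z ∈ R ∙ U ⊔ N.toSubmodule := hsup ▸ Submodule.mem_top
  rw [LieSubmodule.lieIdeal_oper_eq_linear_span', Submodule.span_le]
  rintro _ ⟨x, -, y, -, rfl⟩
  obtain ⟨_, hs, n, hn, rfl⟩ := Submodule.mem_sup.mp (hmem x)
  obtain ⟨_, ht, m, hm, rfl⟩ := Submodule.mem_sup.mp (hmem y)
  obtain ⟨α, rfl⟩ := Submodule.mem_span_singleton.mp hs
  obtain ⟨β, rfl⟩ := Submodule.mem_span_singleton.mp ht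
  refine ⟨α • m - β • n, ?_⟩
  simp only [LieAlgebra.ad_apply, lie_sub, lie_smul, add_lie, lie_add, smul_lie, lie_self,
    LieIdeal.lie_eq_zero_of_isLieAbelian hN hn hm, ← lie_skew U n]
  module

theorem LinearMap.surjective_of_le_range_ad {U : L}
    {A : (L ⧸ R ∙ U) →ₗ[R] (L ⧸ R ∙ U)}
    (hA : ∀ x, A (Submodule.Quotient.mk x) = Submodule.Quotient.mk ⁅U, x⁆)
    {W : Submodule R L} (hsup : R ∙ U ⊔ W = ⊤)
    (hW : W ≤ LinearMap.range (LieAlgebra.ad R L U)) :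
    Function.Surjective A := by
  intro v
  obtain ⟨y, rfl⟩ := Submodule.Quotient.mk_surjective _ v
  obtain ⟨s, hs, _, hw, rfl⟩ := Submodule.mem_sup.mp (hsup ▸ Submodule.mem_top : y ∈ R ∙ U ⊔ W)
  obtain ⟨x, rfl⟩ := hW hw
  refine ⟨Submodule.Quotient.mk x, ?_⟩
  rw [hA, Submodule.Quotient.mk_add, (Submodule.Quotient.mk_eq_zero _).mpr hs, zero_add,
    LieAlgebra.ad_apply]

end Lie

theorem stmt9_general {L : Type*} [LieRing L] [LieAlgebra ℝ L] [Module.Finite ℝ L]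
    (hdim : Module.finrank ℝ L = 4)
    (N : LieIdeal ℝ L) (habel : IsLieAbelian N)
    (hNdim : Module.finrank ℝ (↥N) = 3)
    (hder : ⁅(⊤ : LieIdeal ℝ L), (⊤ : LieIdeal ℝ L)⁆ = N)
    (U : L)
    (A : (L ⧸ Submodule.span ℝ {U}) →ₗ[ℝ] (L ⧸ Submodule.span ℝ {U}))
    (hA : ∀ x : L, A (Submodule.Quotient.mk x) = Submodule.Quotient.mk ⁅U, x⁆)
    (q : LinearMap.BilinForm ℝ (L ⧸ Submodule.span ℝ {U}))
    (ε : ℝ) (hε : ε = 1 ∨ ε = -1)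
    (b : Module.Basis (Fin 3) ℝ (L ⧸ Submodule.span ℝ {U}))
    (hq : ∀ i j : Fin 3, q (b i) (b j) = if i = j then ![1, 1, ε] i else 0)
    (hskew : ∀ u v, q (A u) v + q u (A v) = 0) :
    A = 0 := by
  have hε0 : ε ≠ 0 := by rcases hε with rfl | rfl <;> norm_num
  have hJ : LinearMap.BilinForm.toMatrix b q = diagonal ![1, 1, ε] := by
    ext i j
    rw [LinearMap.BilinForm.toMatrix_apply, hq, diagonal_apply]
  have hM : (diagonal ![1, 1, ε]).IsSkewAdjoint (LinearMap.toMatrix b b A) :=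
    hJ ▸ LinearMap.IsSkewAdjoint.toMatrix
      (fun u v => by simpa [eq_neg_iff_add_eq_zero] using hskew u v) b
  by_cases hUN : U ∈ N
  · have hA2 : A * A = 0 := by
      ext x
      simp [hA, LieIdeal.lie_lie_eq_zero_of_mem habel hder.le hUN]
    apply (LinearMap.toMatrix b b).injective
    rw [map_zero]
    refine hM.eq_zero_of_mul_self_eq_zero ?_ one_pos one_pos hε0
    rw [← LinearMap.toMatrix_mul, hA2, map_zero]
  · have hsup : ℝ ∙ U ⊔ N.toSubmodule = ⊤ :=
      Submodule.span_singleton_sup_eq_top hUN (by rw [hdim]; exact congrArg (· + 1) hNdim)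
    have hsurj : Function.Surjective A :=
      LinearMap.surjective_of_le_range_ad hA hsup
        (hder ▸ LieIdeal.lie_top_top_le_range_ad habel hsup)
    have hdet : LinearMap.det A = 0 := by
      rw [← LinearMap.det_toMatrix b]
      exact hM.det_eq_zero (by simp [Fin.prod_univ_three, hε0]) (by decide)
    exact absurd (LinearMap.range_eq_top_of_surjective A hsurj)
      (LinearMap.range_lt_top_of_det_eq_zero hdet).ne

/-- Let `L` be a solvable 4-dimensional real Lie algebra whose derived algebra is a
3-dimensional abelian ideal `N` (so `L ≅ ℝ ⋉ ℝ³` with `[L,L] = ℝ³`). Then there is no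
one-dimensional subspace `I = span {U}` such that the endomorphism of `L / I` induced by
`ad U` is nonzero and skew-symmetric for a nondegenerate symmetric bilinear form of
signature (3,0) or (2,1) on `L / I`: any such induced skew-symmetric map must vanish. -/
theorem stmt9 {L : Type*} [LieRing L] [LieAlgebra ℝ L] [Module.Finite ℝ L]
    (hdim : Module.finrank ℝ L = 4)
    (N : LieIdeal ℝ L) (habel : IsLieAbelian N)
    (hNdim : Module.finrank ℝ (↥N) = 3)
    (hder : ⁅(⊤ : LieIdeal ℝ L), (⊤ : LieIdeal ℝ L)⁆ = N)
    (U : L) (hU : U ≠ 0)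
    (A : (L ⧸ Submodule.span ℝ {U}) →ₗ[ℝ] (L ⧸ Submodule.span ℝ {U}))
    (hA : ∀ x : L, A (Submodule.Quotient.mk x) = Submodule.Quotient.mk ⁅U, x⁆)
    (q : LinearMap.BilinForm ℝ (L ⧸ Submodule.span ℝ {U}))
    (hsymm : ∀ u v, q u v = q v u)
    (ε : ℝ) (hε : ε = 1 ∨ ε = -1)
    (b : Module.Basis (Fin 3) ℝ (L ⧸ Submodule.span ℝ {U}))
    (hq : ∀ i j : Fin 3, q (b i) (b j) = if i = j then ![1, 1, ε] i else 0)
    (hskew : ∀ u v, q (A u) v + q u (A v) = 0) :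
    A = 0 :=
  stmt9_general hdim N habel hNdim hder U A hA q ε hε b hq hskew
end
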